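/- arXiv:1805.03396 — 6 statements merged into one kernel-verified Lean document; each statement's English description precedes it below -/
import Mathlib

section
/- Let (λ₁,...,λₙ) and (μ₁,...,μₙ) be vectors in ℂⁿ. If there exists a doubly stochastic matrix D ∈ Mₙ(ℂ) with (λ₁,...,λₙ)ᵀ = D(μ₁,...,μₙ)ᵀ, then the diagonal matrix diag(λ₁,...,λₙ) lies in the convex hull of the unitary orbit of diag(μ₁,...,μₙ) in Mₙ(ℂ). -/
/-! By Birkhoff's theorem `D` is a convex combination of permutation matrices, so `λ` is the same
convex combination of the permuted vectors `μ ∘ σ`. Since `diagonal` is linear, `diag λ` is then a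
convex combination of the matrices `diag (μ ∘ σ)`, each of which is the conjugate of `diag μ` by a
permutation matrix, and permutation matrices are unitary. -/

open Matrix Equiv

section Permutation

variable {n R : Type*} [Fintype n] [DecidableEq n]

theorem Matrix.permMatrix_mem_unitary [Semiring R] [StarRing R] (σ : Perm n) :
    σ.permMatrix R ∈ unitary (Matrix n n R) := by
  rw [Unitary.mem_iff, star_eq_conjTranspose, conjTranspose_permMatrix, ← permMatrix_mul,
    ← permMatrix_mul, mul_inv_cancel, inv_mul_cancel, permMatrix_one]
  exact ⟨rfl, rfl⟩

theorem Matrix.star_permMatrix_mul_diagonal_mul_permMatrix [Semiring R] [StarRing R]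
    (σ : Perm n) (d : n → R) :
    star (σ.permMatrix R) * diagonal d * σ.permMatrix R = diagonal (d ∘ ⇑σ⁻¹) := by
  rw [star_eq_conjTranspose, conjTranspose_permMatrix, PEquiv.toMatrix_toPEquiv_mul,
    PEquiv.mul_toMatrix_toPEquiv, submatrix_submatrix, Perm.inv_def]
  exact submatrix_diagonal_equiv d σ.symm

end Permutation

theorem sum_smul_mem_convexHull_comp_perm_of_mem_doublyStochastic {n R E : Type*}
    [Fintype n] [DecidableEq n] [Field R] [LinearOrder R] [IsStrictOrderedRing R]
    [AddCommGroup E] [Module R E] {D : Matrix n n R} (hD : D ∈ doublyStochastic R n)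
    (x : n → E) :
    (fun i ↦ ∑ j, D i j • x j) ∈ convexHull R (Set.range fun σ : Perm n ↦ x ∘ σ) := by
  obtain ⟨w, hw0, hw1, rfl⟩ := exists_eq_sum_perm_of_mem_doublyStochastic hD
  refine mem_convexHull_of_exists_fintype w (fun σ ↦ x ∘ σ) hw0 hw1 (fun σ ↦ ⟨σ, rfl⟩) ?_
  ext i
  simp only [Finset.sum_apply, Pi.smul_apply, Function.comp_apply, Matrix.sum_apply,
    Matrix.smul_apply, PEquiv.toMatrix_apply, toPEquiv_apply, Option.mem_def, Option.some.injEq,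
    smul_eq_mul, mul_ite, mul_one, mul_zero, Finset.sum_smul, ite_smul, zero_smul]
  rw [Finset.sum_comm]
  simp

theorem diagonal_mem_convexHull_unitaryOrbit_of_doublyStochastic_general {n : ℕ}
    (lam mu : Fin n → ℂ) (D : Matrix (Fin n) (Fin n) ℝ)
    (hD0 : ∀ i j, 0 ≤ D i j)
    (hrow : ∀ i, ∑ j, D i j = 1) (hcol : ∀ j, ∑ i, D i j = 1)
    (heq : ∀ i, lam i = ∑ j, (D i j : ℂ) * mu j) :
    Matrix.diagonal lam ∈ convexHull ℝ
      {M : Matrix (Fin n) (Fin n) ℂ |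
        ∃ U ∈ unitary (Matrix (Fin n) (Fin n) ℂ), M = star U * Matrix.diagonal mu * U} := by
  have hD : D ∈ doublyStochastic ℝ (Fin n) := mem_doublyStochastic_iff_sum.2 ⟨hD0, hrow, hcol⟩
  have hlam : lam = fun i ↦ ∑ j, D i j • mu j := by
    ext i
    simp only [heq, Complex.real_smul]
  have hperm : ∀ σ : Perm (Fin n), diagonal (mu ∘ σ) ∈
      {M : Matrix (Fin n) (Fin n) ℂ |
        ∃ U ∈ unitary (Matrix (Fin n) (Fin n) ℂ), M = star U * Matrix.diagonal mu * U} :=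
    fun σ ↦ ⟨σ⁻¹.permMatrix ℂ, permMatrix_mem_unitary _, by
      rw [star_permMatrix_mul_diagonal_mul_permMatrix, inv_inv]⟩
  have hmem := Set.mem_image_of_mem (diagonalLinearMap (Fin n) ℝ ℂ)
    (sum_smul_mem_convexHull_comp_perm_of_mem_doublyStochastic hD mu)
  rw [LinearMap.image_convexHull, ← Set.range_comp] at hmem
  rw [hlam]
  exact convexHull_mono (Set.range_subset_iff.2 hperm) hmem

/-- Horn/Birkhoff direction: if the vector λ is obtained from μ by a doubly
stochastic matrix, then diag(λ) is in the convex hull of the unitary orbit of diag(μ). -/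
theorem diagonal_mem_convexHull_unitaryOrbit_of_doublyStochastic {n : ℕ}
    (lam mu : Fin n → ℂ) (D : Matrix (Fin n) (Fin n) ℝ)
    (hD0 : ∀ i j, 0 ≤ D i j) (hD1 : ∀ i j, D i j ≤ 1)
    (hrow : ∀ i, ∑ j, D i j = 1) (hcol : ∀ j, ∑ i, D i j = 1)
    (heq : ∀ i, lam i = ∑ j, (D i j : ℂ) * mu j) :
    Matrix.diagonal lam ∈ convexHull ℝ
      {M : Matrix (Fin n) (Fin n) ℂ |
        ∃ U ∈ unitary (Matrix (Fin n) (Fin n) ℂ), M = star U * Matrix.diagonal mu * U} :=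
  diagonal_mem_convexHull_unitaryOrbit_of_doublyStochastic_general lam mu D hD0 hrow hcol heq
end

section
/- Let A be a unital C*-algebra, a ∈ A, and let K > 1 be an integer. Let y = diag(a,a,...,a) (K copies) and y' = diag(0,a,...,a) (one zero followed by K−1 copies of a), viewed in M_K(A) ⊆ some unital C*-algebra where these make sense as orthogonal sums. Then the distance from y to the convex hull of the unitary orbit of y' is at most ‖a‖/K. -/
/-!
Conjugating `diag(0, a, …, a)` by the `K` cyclic shift permutation matrices moves the zero block
through all `K` positions, so the average of these conjugates is `((K - 1) / K) • diag(a, …, a)`.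
It lies in the convex hull of the unitary orbit and differs from `diag(a, …, a)` by the image of
`a / K` under the `⋆`-homomorphism `b ↦ ψ (diag(b, …, b))`, which is contractive.
-/

open Matrix

namespace Matrix

variable {n R : Type*} [Fintype n] [DecidableEq n]

lemma permMatrix_mem_unitary_s5 [Semiring R] [StarRing R] (σ : Equiv.Perm n) :
    σ.permMatrix R ∈ unitary (Matrix n n R) := by
  rw [Unitary.mem_iff, star_eq_conjTranspose, conjTranspose_permMatrix, ← permMatrix_mul,
    ← permMatrix_mul]
  simp

lemma star_permMatrix_mul_diagonal_mul_permMatrix_s5 [Semiring R] [StarRing R]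
    (σ : Equiv.Perm n) (d : n → R) :
    star (σ.permMatrix R) * diagonal d * σ.permMatrix R = diagonal (d ∘ σ.symm) := by
  rw [star_eq_conjTranspose, conjTranspose_permMatrix, Equiv.Perm.inv_def,
    PEquiv.toMatrix_toPEquiv_mul, PEquiv.mul_toMatrix_toPEquiv, submatrix_submatrix]
  exact submatrix_diagonal_equiv d σ.symm

lemma sum_star_permMatrix_addRight_mul_diagonal_mul [Semiring R] [StarRing R] [AddGroup n]
    (d : n → R) :
    ∑ j : n, star ((Equiv.addRight j).permMatrix R) * diagonal d * (Equiv.addRight j).permMatrix R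
      = diagonal fun _ => ∑ i, d i := by
  calc _ = ∑ j : n, diagonalAddMonoidHom n R (d ∘ (Equiv.addRight j).symm) :=
        Finset.sum_congr rfl fun j _ => star_permMatrix_mul_diagonal_mul_permMatrix_s5 _ d
    _ = _ := by
      rw [← map_sum, diagonalAddMonoidHom_apply]
      congr 1
      ext i
      simpa [sub_eq_add_neg] using Equiv.sum_comp (Equiv.subLeft i) d

variable (n) in
def scalarStarAlgHom (S A : Type*) [CommSemiring S] [Semiring A] [StarRing A] [Algebra S A] :
    A →⋆ₐ[S] Matrix n n A where
  toFun a := diagonal fun _ => a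
  map_one' := diagonal_one
  map_mul' _ _ := (diagonal_mul_diagonal _ _).symm
  map_zero' := diagonal_zero
  map_add' _ _ := (diagonal_add _ _).symm
  commutes' _ := (algebraMap_eq_diagonal _).symm
  map_star' _ := (diagonal_conjTranspose _).symm

end Matrix

lemma Fintype.inv_card_smul_sum_mem_convexHull {𝕜 E ι : Type*} [Field 𝕜] [LinearOrder 𝕜]
    [IsStrictOrderedRing 𝕜] [AddCommGroup E] [Module 𝕜 E] [Fintype ι] [Nonempty ι]
    {s : Set E} {f : ι → E} (hf : ∀ i, f i ∈ s) :
    (Fintype.card ι : 𝕜)⁻¹ • ∑ i, f i ∈ convexHull 𝕜 s := by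
  have := Finset.univ.centerMass_mem_convexHull (w := fun _ => (1 : 𝕜))
    (fun _ _ => zero_le_one) (by simp [Fintype.card_pos]) fun i _ => hf i
  simpa [Finset.centerMass] using this

lemma Fin.sum_ite_val_eq_zero {M : Type*} [AddCommMonoid M] {K : ℕ} [NeZero K] (a : M) :
    ∑ i : Fin K, (if (i : ℕ) = 0 then 0 else a) = (K - 1) • a := by
  obtain _ | K := K
  · exact absurd rfl (NeZero.ne 0)
  · simp [Fin.sum_univ_succ]

theorem dist_diag_convexHull_unitaryOrbit_le_general {A B : Type*} [CStarAlgebra A] [CStarAlgebra B]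
    (K : ℕ) (hK : 1 < K) (a : A)
    (ψ : Matrix (Fin K) (Fin K) A →⋆ₐ[ℂ] B) :
    Metric.infDist (ψ (Matrix.diagonal fun _ => a))
      (convexHull ℝ {z | ∃ u ∈ unitary (Matrix (Fin K) (Fin K) A),
        z = ψ (star u * Matrix.diagonal (fun i : Fin K => if (i : ℕ) = 0 then 0 else a) * u)})
      ≤ ‖a‖ / K := by
  have : NeZero K := ⟨by omega⟩
  set v : Fin K → A := fun i => if (i : ℕ) = 0 then 0 else a
  set S : Set B := {z | ∃ u ∈ unitary (Matrix (Fin K) (Fin K) A), z = ψ (star u * diagonal v * u)}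
  set φ : A →⋆ₐ[ℂ] B := ψ.comp (scalarStarAlgHom (Fin K) ℂ A)
  set P : Fin K → Matrix (Fin K) (Fin K) A := fun j => (Equiv.addRight j).permMatrix A
  set c : Fin K → B := fun j => ψ (star (P j) * diagonal v * P j)
  have hc_mem : (K : ℝ)⁻¹ • ∑ j, c j ∈ convexHull ℝ S := by
    simpa only [Fintype.card_fin] using
      Fintype.inv_card_smul_sum_mem_convexHull (𝕜 := ℝ) (s := S) (f := c)
        fun j => ⟨P j, permMatrix_mem_unitary_s5 _, rfl⟩
  have hc_sum : ∑ j, c j = (K - 1) • φ a := by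
    rw [← map_sum, sum_star_permMatrix_addRight_mul_diagonal_mul, Fin.sum_ite_val_eq_zero]
    exact map_nsmul φ _ _
  have hc_dist : φ a - (K : ℝ)⁻¹ • ∑ j, c j = (K : ℝ)⁻¹ • φ a := by
    rw [hc_sum, ← Nat.cast_smul_eq_nsmul ℝ, Nat.cast_sub hK.le]
    match_scalars
    field_simp
    ring
  calc Metric.infDist (φ a) (convexHull ℝ S) ≤ dist (φ a) ((K : ℝ)⁻¹ • ∑ j, c j) :=
        Metric.infDist_le_dist_of_mem hc_mem
    _ = (K : ℝ)⁻¹ * ‖φ a‖ := by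
      rw [dist_eq_norm, hc_dist, norm_smul, norm_inv, RCLike.norm_natCast]
    _ ≤ ‖a‖ / K := by
      rw [div_eq_inv_mul]
      gcongr
      exact NonUnitalStarAlgHom.norm_apply_le φ a

/-- for y = diag(a,...,a) (K copies) and y' = diag(0,a,...,a) in M_K(A)
(viewed inside a unital C*-algebra B via an injective — hence isometric —
star-algebra embedding ψ), the distance from y to the convex hull of the unitary
orbit of y' is at most ‖a‖/K. -/
theorem dist_diag_convexHull_unitaryOrbit_le {A B : Type*} [CStarAlgebra A] [CStarAlgebra B]
    (K : ℕ) (hK : 1 < K) (a : A)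
    (ψ : Matrix (Fin K) (Fin K) A →⋆ₐ[ℂ] B) (hψ : Function.Injective ψ) :
    Metric.infDist (ψ (Matrix.diagonal fun _ => a))
      (convexHull ℝ {z | ∃ u ∈ unitary (Matrix (Fin K) (Fin K) A),
        z = ψ (star u * Matrix.diagonal (fun i : Fin K => if (i : ℕ) = 0 then 0 else a) * u)})
      ≤ ‖a‖ / K :=
  dist_diag_convexHull_unitaryOrbit_le_general K hK a ψ
end

section
/- Let A be a unital C*-algebra and let q, e, p be mutually orthogonal projections with q + e + p = 1_A. Suppose K ≥ 1 is an integer and there exist K mutually orthogonal projections q₁,...,q_K ≤ q and unitaries u₁,...,u_K ∈ A with uⱼ*euⱼ = qⱼ for each j. Then for any y' ∈ eAe and any y ∈ pAp, the distance from y to the convex hull of the unitary orbit of y + y' is at most ‖y'‖/(K+1). -/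
/-!
For each `j`, `s = u_j⋆ e` is a partial isometry from `e` onto `q_j`, so
`w_j = s + s⋆ + (1 - e - q_j)` is a self-adjoint unitary; it fixes `pAp` pointwise and conjugates
`y'` to `u_j⋆ y' u_j ∈ q_j A q_j`. Averaging `y + y'` with its `K` conjugates by the `w_j` gives
`y + (K + 1)⁻¹ ∑ yᵢ` with the `yᵢ` in the mutually orthogonal corners `eAe, q_1Aq_1, …`, and such a
sum has norm at most `maxᵢ ‖yᵢ‖ = ‖y'‖`: for `n` orthogonal self-adjoint `gᵢ` of norm `≤ C` the
C⋆-identity gives `‖∑ gᵢ‖ ^ 2 ^ k = ‖∑ gᵢ ^ 2 ^ k‖ ≤ n * C ^ 2 ^ k` for every `k`.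
-/

open Finset Function

theorem Fin.pairwise_cons {α : Type*} {r : α → α → Prop} {n : ℕ} {a : α} {f : Fin n → α}
    (ha : ∀ j, r a (f j) ∧ r (f j) a) (hf : Pairwise (r on f)) :
    Pairwise (r on (Fin.cons a f : Fin (n + 1) → α)) := by
  intro i j hij
  cases i using Fin.cases <;> cases j using Fin.cases
  · exact absurd rfl hij
  · exact (ha _).1
  · exact (ha _).2
  · exact hf (ne_of_apply_ne Fin.succ hij)

section OrthogonalSum

variable {ι : Type*} [Fintype ι]

theorem Fintype.sum_mul_sum_of_pairwise {R : Type*} [NonUnitalNonAssocSemiring R] {f g : ι → R}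
    (h : Pairwise fun i j => f i * g j = 0) : (∑ i, f i) * ∑ j, g j = ∑ i, f i * g i := by
  rw [Finset.sum_mul_sum]
  exact Finset.sum_congr rfl fun i _ => Fintype.sum_eq_single i fun j hji => h hji.symm

theorem Fintype.sum_pow_succ_of_pairwise {R : Type*} [Semiring R] {g : ι → R}
    (h : Pairwise fun i j => g i * g j = 0) (m : ℕ) :
    (∑ i, g i) ^ (m + 1) = ∑ i, g i ^ (m + 1) := by
  induction m with
  | zero => simp
  | succ m ih =>
    rw [pow_succ, ih, Fintype.sum_mul_sum_of_pairwise fun i j hij => ?_]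
    · simp_rw [← pow_succ]
    · dsimp only
      rw [pow_succ, mul_assoc, h hij, mul_zero]

theorem le_of_forall_pow_two_pow_le {r C n : ℝ} (hC : 0 ≤ C)
    (h : ∀ k : ℕ, r ^ 2 ^ k ≤ n * C ^ 2 ^ k) : r ≤ C := by
  by_contra! hCr
  obtain rfl | hC := hC.eq_or_lt
  · exact hCr.not_ge (by simpa using h 0)
  have hrC : 1 < r / C := (one_lt_div hC).2 hCr
  obtain ⟨k, hk⟩ := pow_unbounded_of_one_lt n hrC
  have : (r / C) ^ 2 ^ k ≤ n := by
    rw [div_pow, div_le_iff₀ (pow_pos hC _)]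
    exact h k
  exact (hk.trans_le ((pow_le_pow_right₀ hrC.le Nat.lt_two_pow_self.le).trans this)).false

variable {A : Type*} [NormedRing A] [StarRing A] [CStarRing A]

theorem IsSelfAdjoint.norm_sum_le_of_pairwise {g : ι → A} (hsa : ∀ i, IsSelfAdjoint (g i))
    (horth : Pairwise fun i j => g i * g j = 0) {C : ℝ} (hC : 0 ≤ C) (hg : ∀ i, ‖g i‖ ≤ C) :
    ‖∑ i, g i‖ ≤ C := by
  refine le_of_forall_pow_two_pow_le (n := Fintype.card ι) hC fun k => ?_
  obtain ⟨m, hm⟩ : ∃ m, 2 ^ k = m + 1 := Nat.exists_eq_add_one.2 (Nat.two_pow_pos k)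
  calc ‖∑ i, g i‖ ^ 2 ^ k = ‖∑ i, g i ^ 2 ^ k‖ := by
        rw [← (isSelfAdjoint_sum _ fun i _ => hsa i).norm_pow_two_pow, hm,
          Fintype.sum_pow_succ_of_pairwise horth]
    _ ≤ ∑ i, ‖g i ^ 2 ^ k‖ := norm_sum_le _ _
    _ ≤ ∑ _i : ι, C ^ 2 ^ k := Finset.sum_le_sum fun i _ => by
        rw [(hsa i).norm_pow_two_pow]
        exact pow_le_pow_left₀ (norm_nonneg _) (hg i) _
    _ = Fintype.card ι * C ^ 2 ^ k := by simp

theorem norm_sum_le_of_pairwise_orthogonal {f : ι → A}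
    (hstar_mul : Pairwise fun i j => star (f i) * f j = 0)
    (hmul_star : Pairwise fun i j => f i * star (f j) = 0)
    {C : ℝ} (hC : 0 ≤ C) (hf : ∀ i, ‖f i‖ ≤ C) : ‖∑ i, f i‖ ≤ C := by
  have hsq : ‖∑ i, f i‖ * ‖∑ i, f i‖ ≤ C * C := by
    rw [← CStarRing.norm_self_mul_star, star_sum, Fintype.sum_mul_sum_of_pairwise hmul_star]
    refine IsSelfAdjoint.norm_sum_le_of_pairwise (fun i => .mul_star_self (f i))
      (fun i j hij => ?_) (mul_nonneg hC hC) fun i => ?_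
    · dsimp only
      rw [mul_assoc, ← mul_assoc (star (f i)), hstar_mul hij, zero_mul, mul_zero]
    · rw [CStarRing.norm_self_mul_star]
      exact mul_le_mul (hf i) (hf i) (norm_nonneg _) hC
  exact (mul_self_le_mul_self_iff (norm_nonneg _) hC).2 hsq

theorem norm_sum_le_of_pairwise_orthogonal_corners {f P : ι → A}
    (hP : ∀ i, IsSelfAdjoint (P i)) (hPP : Pairwise fun i j => P i * P j = 0)
    (hfP : ∀ i, P i * f i * P i = f i) {C : ℝ} (hC : 0 ≤ C) (hf : ∀ i, ‖f i‖ ≤ C) :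
    ‖∑ i, f i‖ ≤ C := by
  have hcorner : ∀ ⦃i j⦄, i ≠ j → ∀ a b : A, P i * a * P i * (P j * b * P j) = 0 := by
    intro i j hij a b
    rw [show P i * a * P i * (P j * b * P j) = P i * a * (P i * P j) * b * P j by noncomm_ring,
      hPP hij, mul_zero, zero_mul, zero_mul]
  have hstar : ∀ i, P i * star (f i) * P i = star (f i) := fun i => by
    conv_rhs => rw [← hfP i]
    simp only [star_mul, (hP i).star_eq, mul_assoc]
  refine norm_sum_le_of_pairwise_orthogonal (fun i j hij => ?_) (fun i j hij => ?_) hC hf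
  · simpa only [hstar, hfP] using hcorner hij (star (f i)) (f j)
  · simpa only [hstar, hfP] using hcorner hij (f i) (star (f j))

end OrthogonalSum

theorem IsSelfAdjoint.mul_eq_zero_comm {R : Type*} [NonUnitalNonAssocRing R] [StarRing R]
    {a b : R} (ha : IsSelfAdjoint a) (hb : IsSelfAdjoint b) (hab : a * b = 0) : b * a = 0 :=
  (ha.commute_of_mul_eq_zero hb hab).eq.symm.trans hab

section SwapUnitary

variable {A : Type*} [Ring A] [StarRing A] {e f u : A}

theorem IsStarProjection.star_mul_mul_of_mem_unitary (he : IsStarProjection e)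
    (hu : u ∈ unitary A) : IsStarProjection (star u * e * u) where
  isIdempotentElem := by
    calc star u * e * u * (star u * e * u) = star u * e * (u * star u) * e * u := by noncomm_ring
      _ = star u * e * u := by
        rw [Unitary.mul_star_self_of_mem hu, mul_one, mul_assoc (star u) e e,
          he.isIdempotentElem.eq]
  isSelfAdjoint := he.isSelfAdjoint.conjugate' u

theorem mul_eq_mul_of_star_mul_mul_eq (hu : u ∈ unitary A) (huf : star u * e * u = f) :
    e * u = u * f := by
  rw [← huf, ← mul_assoc, ← mul_assoc, Unitary.mul_star_self_of_mem hu, one_mul]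

theorem star_mul_eq_mul_star_of_star_mul_mul_eq (hu : u ∈ unitary A) (huf : star u * e * u = f) :
    star u * e = f * star u := by
  rw [← huf, mul_assoc _ u, Unitary.mul_star_self_of_mem hu, mul_one]

theorem corner_star_mul_mul_of_corner (hu : u ∈ unitary A) (huf : star u * e * u = f) {x : A}
    (hx : e * x * e = x) : f * (star u * x * u) * f = star u * x * u :=
  calc f * (star u * x * u) * f = f * star u * x * (u * f) := by noncomm_ring
    _ = star u * (e * x * e) * u := by
        rw [← star_mul_eq_mul_star_of_star_mul_mul_eq hu huf,
          ← mul_eq_mul_of_star_mul_mul_eq hu huf]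
        noncomm_ring
    _ = star u * x * u := by rw [hx]

/-- `s + s⋆ + (1 - e - f)` for the partial isometry `s = u⋆ e` from `e` onto `f = u⋆ e u`. -/
def swapUnitary (e u : A) : A := star u * e + e * u + (1 - e - star u * e * u)

theorem star_swapUnitary (he : IsSelfAdjoint e) : star (swapUnitary e u) = swapUnitary e u := by
  simp only [swapUnitary, star_add, star_sub, star_mul, star_star, star_one, he.star_eq]
  noncomm_ring

theorem swapUnitary_mul_of_mul_eq_zero (hu : u ∈ unitary A) (huf : star u * e * u = f)
    {x : A} (hex : e * x = 0) (hfx : f * x = 0) : swapUnitary e u * x = x := by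
  calc swapUnitary e u * x = star u * (e * x) + e * u * x + (x - e * x - star u * e * u * x) := by
        unfold swapUnitary; noncomm_ring
    _ = x := by
        rw [mul_eq_mul_of_star_mul_mul_eq hu huf, huf, mul_assoc, hfx, hex]; noncomm_ring

theorem mul_swapUnitary_of_mul_eq_zero (hu : u ∈ unitary A) (huf : star u * e * u = f)
    {x : A} (hxe : x * e = 0) (hxf : x * f = 0) : x * swapUnitary e u = x := by
  calc x * swapUnitary e u = x * (star u * e) + x * e * u + (x - x * e - x * (star u * e * u)) := by
        unfold swapUnitary; noncomm_ring
    _ = x := by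
        rw [huf, star_mul_eq_mul_star_of_star_mul_mul_eq hu huf, ← mul_assoc, hxf, hxe]
        noncomm_ring

theorem swapUnitary_mul_proj (he : IsStarProjection e) (hu : u ∈ unitary A)
    (huf : star u * e * u = f) (hef : e * f = 0) : swapUnitary e u * e = star u * e := by
  have hfe : f * e = 0 :=
    he.isSelfAdjoint.mul_eq_zero_comm (huf ▸ (he.star_mul_mul_of_mem_unitary hu).isSelfAdjoint) hef
  calc swapUnitary e u * e = star u * (e * e) + e * u * e + (e - e * e - star u * e * u * e) := by
        unfold swapUnitary; noncomm_ring
    _ = star u * e := by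
        rw [mul_eq_mul_of_star_mul_mul_eq hu huf, huf, mul_assoc, hfe, he.isIdempotentElem.eq]
        noncomm_ring

theorem proj_mul_swapUnitary (he : IsStarProjection e) (hu : u ∈ unitary A)
    (huf : star u * e * u = f) (hef : e * f = 0) : e * swapUnitary e u = e * u := by
  simpa only [star_mul, star_star, he.isSelfAdjoint.star_eq, star_swapUnitary he.isSelfAdjoint]
    using congrArg star (swapUnitary_mul_proj he hu huf hef)

theorem swapUnitary_mul_conj_proj (he : IsStarProjection e) (hu : u ∈ unitary A)
    (huf : star u * e * u = f) (hef : e * f = 0) : swapUnitary e u * f = e * u := by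
  have hff : f * f = f := huf ▸ (he.star_mul_mul_of_mem_unitary hu).isIdempotentElem.eq
  calc swapUnitary e u * f = star u * (e * f) + e * (u * f) + (f - e * f - star u * e * u * f) := by
        unfold swapUnitary; noncomm_ring
    _ = e * u := by
        rw [← mul_eq_mul_of_star_mul_mul_eq hu huf, ← mul_assoc e e, he.isIdempotentElem.eq, huf,
          hff, hef]
        noncomm_ring

theorem swapUnitary_mul_swapUnitary (he : IsStarProjection e) (hu : u ∈ unitary A)
    (huf : star u * e * u = f) (hef : e * f = 0) : swapUnitary e u * swapUnitary e u = 1 := by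
  have hf : IsStarProjection f := huf ▸ he.star_mul_mul_of_mem_unitary hu
  have hfe : f * e = 0 := he.isSelfAdjoint.mul_eq_zero_comm hf.isSelfAdjoint hef
  have hcompl : swapUnitary e u * (1 - e - f) = 1 - e - f := by
    refine swapUnitary_mul_of_mul_eq_zero hu huf ?_ ?_
    · rw [mul_sub, mul_sub, mul_one, he.isIdempotentElem.eq, hef, sub_self, sub_zero]
    · rw [mul_sub, mul_sub, mul_one, hf.isIdempotentElem.eq, hfe, sub_zero, sub_self]
  set w := swapUnitary e u
  calc w * w = w * (f * star u + e * u + (1 - e - f)) := by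
        rw [← star_mul_eq_mul_star_of_star_mul_mul_eq hu huf, ← huf]; rfl
    _ = w * f * star u + w * e * u + w * (1 - e - f) := by simp only [mul_add, mul_assoc]
    _ = 1 := by
        rw [swapUnitary_mul_conj_proj he hu huf hef, swapUnitary_mul_proj he hu huf hef,
          hcompl, huf, mul_assoc, Unitary.mul_star_self_of_mem hu]
        noncomm_ring

theorem swapUnitary_mem_unitary (he : IsStarProjection e) (hu : u ∈ unitary A)
    (hef : e * (star u * e * u) = 0) : swapUnitary e u ∈ unitary A := by
  rw [Unitary.mem_iff, star_swapUnitary he.isSelfAdjoint]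
  exact ⟨swapUnitary_mul_swapUnitary he hu rfl hef, swapUnitary_mul_swapUnitary he hu rfl hef⟩

theorem swapUnitary_conj_of_corner (he : IsStarProjection e) (hu : u ∈ unitary A)
    (huf : star u * e * u = f) (hef : e * f = 0) {x : A} (hx : e * x * e = x) :
    swapUnitary e u * x * swapUnitary e u = star u * x * u :=
  calc swapUnitary e u * x * swapUnitary e u
      = swapUnitary e u * e * x * (e * swapUnitary e u) := by
        conv_lhs => rw [← hx]
        noncomm_ring
    _ = star u * (e * x * e) * u := by
        rw [swapUnitary_mul_proj he hu huf hef,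
          proj_mul_swapUnitary he hu huf hef]
        noncomm_ring
    _ = star u * x * u := by rw [hx]

theorem swapUnitary_conj_of_orthogonal_corner (he : IsStarProjection e) (hu : u ∈ unitary A)
    (huf : star u * e * u = f) {p : A} (hp : IsSelfAdjoint p) (hep : e * p = 0)
    (hfp : f * p = 0) {x : A} (hx : p * x * p = x) : swapUnitary e u * x * swapUnitary e u = x := by
  have hf : IsSelfAdjoint f := huf ▸ he.isSelfAdjoint.conjugate' u
  calc swapUnitary e u * x * swapUnitary e u
      = swapUnitary e u * p * x * (p * swapUnitary e u) := by
        conv_lhs => rw [← hx]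
        noncomm_ring
    _ = x := by
        rw [swapUnitary_mul_of_mul_eq_zero hu huf hep hfp,
          mul_swapUnitary_of_mul_eq_zero hu huf (he.isSelfAdjoint.mul_eq_zero_comm hp hep)
            (hf.mul_eq_zero_comm hp hfp), hx]

end SwapUnitary

theorem infDist_convexHull_le_norm_sum_div {E ι : Type*} [SeminormedAddCommGroup E]
    [NormedSpace ℝ E] [Fintype ι] [Nonempty ι] {S : Set E} (y : E) (f : ι → E)
    (hf : ∀ i, y + f i ∈ S) :
    Metric.infDist y (convexHull ℝ S) ≤ ‖∑ i, f i‖ / Fintype.card ι := by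
  have hmem : y + (Fintype.card ι : ℝ)⁻¹ • ∑ i, f i ∈ convexHull ℝ S := by
    convert univ.centerMass_mem_convexHull (w := fun _ => (1 : ℝ)) (fun _ _ => zero_le_one)
      (by simp [Fintype.card_pos]) fun i _ => hf i using 1
    have hcard : (Fintype.card ι : ℝ) ≠ 0 := Nat.cast_ne_zero.2 Fintype.card_ne_zero
    simp [centerMass, sum_add_distrib, smul_add, ← Nat.cast_smul_eq_nsmul ℝ, smul_smul, hcard]
  calc Metric.infDist y (convexHull ℝ S)
      ≤ dist y (y + (Fintype.card ι : ℝ)⁻¹ • ∑ i, f i) := Metric.infDist_le_dist_of_mem hmem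
    _ = ‖∑ i, f i‖ / Fintype.card ι := by
        rw [dist_eq_norm, sub_add_cancel_left, norm_neg, norm_smul, norm_inv, RCLike.norm_natCast,
          inv_mul_eq_div]

theorem dist_convexHull_unitaryOrbit_corner_le_general {A : Type*} [CStarAlgebra A]
    (K : ℕ) (q e p : A)
    (he : e * e = e ∧ star e = e) (hp : p * p = p ∧ star p = p)
    (hqe : q * e = 0) (hqp : q * p = 0) (hep : e * p = 0)
    (q' : Fin K → A) (hq' : ∀ j, q' j * q' j = q' j ∧ star (q' j) = q' j)
    (hq'o : ∀ i j, i ≠ j → q' i * q' j = 0)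
    (hq'le : ∀ j, q' j * q = q' j)
    (u : Fin K → A) (hu : ∀ j, u j ∈ unitary A ∧ star (u j) * e * u j = q' j)
    (y' y : A) (hy' : e * y' * e = y') (hy : p * y * p = y) :
    Metric.infDist y (convexHull ℝ {z | ∃ v ∈ unitary A, z = star v * (y + y') * v})
      ≤ ‖y'‖ / (K + 1) := by
  have he' : IsStarProjection e := ⟨he.1, he.2⟩
  have hq'e : ∀ j, q' j * e = 0 := fun j => by rw [← hq'le j, mul_assoc, hqe, mul_zero]
  have hq'p : ∀ j, q' j * p = 0 := fun j => by rw [← hq'le j, mul_assoc, hqp, mul_zero]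
  have heq' : ∀ j, e * q' j = 0 := fun j => IsSelfAdjoint.mul_eq_zero_comm (hq' j).2 he.2 (hq'e j)
  let P : Fin (K + 1) → A := Fin.cons e q'
  let F : Fin (K + 1) → A := Fin.cons y' fun j => star (u j) * y' * u j
  have hmem : ∀ i, y + F i ∈ {z | ∃ v ∈ unitary A, z = star v * (y + y') * v} := by
    refine Fin.cases ⟨1, one_mem _, by simp [F]⟩ fun j => ?_
    refine ⟨swapUnitary e (u j), swapUnitary_mem_unitary he' (hu j).1 ((hu j).2 ▸ heq' j), ?_⟩
    rw [star_swapUnitary he.2, mul_add, add_mul,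
      swapUnitary_conj_of_orthogonal_corner he' (hu j).1 (hu j).2 hp.2 hep (hq'p j) hy,
      swapUnitary_conj_of_corner he' (hu j).1 (hu j).2 (heq' j) hy']
    rfl
  have hcorner : ∀ i, P i * F i * P i = F i :=
    Fin.cases hy' fun j => corner_star_mul_mul_of_corner (hu j).1 (hu j).2 hy'
  have hnorm : ∀ i, ‖F i‖ ≤ ‖y'‖ := by
    refine Fin.cases le_rfl fun j => ?_
    simp only [F, Fin.cons_succ]
    rw [CStarRing.norm_mul_mem_unitary _ (hu j).1,
      CStarRing.norm_mem_unitary_mul _ (Unitary.star_mem (hu j).1)]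
  calc Metric.infDist y (convexHull ℝ {z | ∃ v ∈ unitary A, z = star v * (y + y') * v})
      ≤ ‖∑ i, F i‖ / (K + 1) := by simpa using infDist_convexHull_le_norm_sum_div y F hmem
    _ ≤ ‖y'‖ / (K + 1) := by
        gcongr
        exact norm_sum_le_of_pairwise_orthogonal_corners (Fin.cases he.2 fun j => (hq' j).2)
          (Fin.pairwise_cons (r := fun a b => a * b = 0) (fun j => ⟨heq' j, hq'e j⟩) hq'o)
          hcorner (norm_nonneg _) hnorm

/-- if q, e, p are mutually orthogonal projections summing to 1 and e is
unitarily equivalent to K mutually orthogonal subprojections of q, then for y' ∈ eAe and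
y ∈ pAp, the distance from y to the convex hull of the unitary orbit of y + y' is at most
‖y'‖/(K+1). -/
theorem dist_convexHull_unitaryOrbit_corner_le {A : Type*} [CStarAlgebra A]
    (K : ℕ) (hK : 1 ≤ K) (q e p : A)
    (hq : q * q = q ∧ star q = q) (he : e * e = e ∧ star e = e) (hp : p * p = p ∧ star p = p)
    (hqe : q * e = 0) (hqp : q * p = 0) (hep : e * p = 0)
    (hsum : q + e + p = 1)
    (q' : Fin K → A) (hq' : ∀ j, q' j * q' j = q' j ∧ star (q' j) = q' j)
    (hq'o : ∀ i j, i ≠ j → q' i * q' j = 0)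
    (hq'le : ∀ j, q' j * q = q' j)
    (u : Fin K → A) (hu : ∀ j, u j ∈ unitary A ∧ star (u j) * e * u j = q' j)
    (y' y : A) (hy' : e * y' * e = y') (hy : p * y * p = y) :
    Metric.infDist y (convexHull ℝ {z | ∃ v ∈ unitary A, z = star v * (y + y') * v})
      ≤ ‖y'‖ / (K + 1) :=
  dist_convexHull_unitaryOrbit_corner_le_general K q e p he hp hqe hqp hep q' hq' hq'o hq'le u hu y'
    y hy' hy
end

section
/- Let (d_{ij}) be an l×l matrix with entries in [0,1] such that every column sums to 1 and the i-th row sums to 1 + ε'ᵢ where |ε'ᵢ| ≤ ε₂ < 1 for all i. Then there exists a doubly stochastic l×l matrix (d'_{ij}) such that Σᵢ |d_{ij} − d'_{ij}| ≤ 2ε₂ for every column j. -/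
/-!
Shrink every row with positive excess `ε'ᵢ` by the factor `1 + ε'ᵢ`. The result is
substochastic, and within each column it loses at most `ε₂` of mass. A substochastic square
matrix is dominated by a doubly stochastic one: its row and column defects have the same total,
so a nonnegative matrix with these margins (the product coupling) can be added. The correction
`d'` and the original `d` both lie above the shrunk matrix and have equal column sums, so the
column-wise `ℓ¹`-distance between them is at most twice the lost mass.
-/

open Finset Matrix

lemma exists_nonneg_with_row_col_sums {ι κ : Type*} [Fintype ι] [Fintype κ]
    {r : ι → ℝ} {c : κ → ℝ} (hr : 0 ≤ r) (hc : 0 ≤ c) (hrc : ∑ i, r i = ∑ j, c j) :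
    ∃ e : ι → κ → ℝ, (∀ i j, 0 ≤ e i j) ∧ (∀ i, ∑ j, e i j = r i) ∧
      ∀ j, ∑ i, e i j = c j := by
  by_cases hS : ∑ j, c j = 0
  · have hr0 : r = 0 := (Fintype.sum_eq_zero_iff_of_nonneg hr).mp (hrc.trans hS)
    have hc0 : c = 0 := (Fintype.sum_eq_zero_iff_of_nonneg hc).mp hS
    exact ⟨0, fun _ _ => le_rfl, by simp [hr0], by simp [hc0]⟩
  refine ⟨fun i j => r i * c j / ∑ j, c j, fun i j =>
    div_nonneg (mul_nonneg (hr i) (hc j)) (sum_nonneg fun j _ => hc j),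
    fun i => ?_, fun j => ?_⟩
  · rw [← sum_div, ← mul_sum, mul_div_cancel_right₀ _ hS]
  · rw [← sum_div, ← sum_mul, hrc, mul_div_cancel_left₀ _ hS]

lemma exists_mem_doublyStochastic_le {n : Type*} [Fintype n] [DecidableEq n]
    {g : Matrix n n ℝ} (hg : ∀ i j, 0 ≤ g i j) (hrow : ∀ i, ∑ j, g i j ≤ 1)
    (hcol : ∀ j, ∑ i, g i j ≤ 1) :
    ∃ M ∈ doublyStochastic ℝ n, ∀ i j, g i j ≤ M i j := by
  have hdefect : ∑ i, (1 - ∑ j, g i j) = ∑ j, (1 - ∑ i, g i j) := by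
    simp only [sum_sub_distrib, sum_const, card_univ]
    rw [sum_comm]
  obtain ⟨e, he, he_row, he_col⟩ := exists_nonneg_with_row_col_sums
    (fun i => sub_nonneg.mpr (hrow i)) (fun j => sub_nonneg.mpr (hcol j)) hdefect
  refine ⟨of fun i j => g i j + e i j, mem_doublyStochastic_iff_sum.mpr
    ⟨fun i j => add_nonneg (hg i j) (he i j), fun i => ?_, fun j => ?_⟩,
    fun i j => le_add_of_nonneg_right (he i j)⟩
  · simp [sum_add_distrib, he_row]
  · simp [sum_add_distrib, he_col]

lemma sum_abs_sub_le_two_mul_sum_sub {ι : Type*} [Fintype ι] {x y z : ι → ℝ}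
    (hzx : z ≤ x) (hzy : z ≤ y) (hxy : ∑ i, x i = ∑ i, y i) :
    ∑ i, |x i - y i| ≤ 2 * ∑ i, (x i - z i) :=
  calc ∑ i, |x i - y i| ≤ ∑ i, ((x i - z i) + (y i - z i)) := by
        gcongr with i
        rw [abs_sub_le_iff]
        constructor <;> linarith [hzx i, hzy i]
    _ = 2 * ∑ i, (x i - z i) := by
        rw [sum_add_distrib, sum_sub_distrib, sum_sub_distrib, ← hxy]
        ring

lemma sub_div_one_add_le_mul {a p : ℝ} (ha : 0 ≤ a) (hp : 0 ≤ p) : a - a / (1 + p) ≤ p * a := by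
  rw [sub_le_iff_le_add, ← sub_le_iff_le_add', le_div_iff₀ (by positivity)]
  nlinarith [mul_nonneg (mul_nonneg hp hp) ha]

theorem exists_doublyStochastic_correction_general {l : ℕ}
    (d : Fin l → Fin l → ℝ) (ε' : Fin l → ℝ) (ε₂ : ℝ)
    (hd0 : ∀ i j, 0 ≤ d i j)
    (hcol : ∀ j, ∑ i, d i j = 1)
    (hrow : ∀ i, ∑ j, d i j = 1 + ε' i)
    (hε' : ∀ i, |ε' i| ≤ ε₂) :
    ∃ d' : Fin l → Fin l → ℝ, (∀ i j, 0 ≤ d' i j) ∧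
      (∀ i, ∑ j, d' i j = 1) ∧ (∀ j, ∑ i, d' i j = 1) ∧
      ∀ j, ∑ i, |d i j - d' i j| ≤ 2 * ε₂ := by
  set p : Fin l → ℝ := fun i => max (ε' i) 0
  have hp : ∀ i, 0 ≤ p i := fun i => le_max_right _ _
  have hpε : ∀ i, p i ≤ ε₂ := fun i => (max_le (le_abs_self _) (abs_nonneg _)).trans (hε' i)
  set g : Fin l → Fin l → ℝ := fun i j => d i j / (1 + p i)
  have hgd : ∀ i j, g i j ≤ d i j := fun i j => div_le_self (hd0 i j) (by linarith [hp i])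
  have hg_row : ∀ i, ∑ j, g i j ≤ 1 := fun i => by
    rw [← sum_div, hrow i]
    exact div_le_one_of_le₀ (by gcongr; exact le_max_left _ _) (by linarith [hp i])
  have hg_col : ∀ j, ∑ i, g i j ≤ 1 := fun j => hcol j ▸ sum_le_sum fun i _ => hgd i j
  obtain ⟨M, hM, hgM⟩ := exists_mem_doublyStochastic_le
    (fun i j => div_nonneg (hd0 i j) (by linarith [hp i])) hg_row hg_col
  obtain ⟨hM0, hM_row, hM_col⟩ := mem_doublyStochastic_iff_sum.mp hM
  refine ⟨M, hM0, hM_row, hM_col, fun j => ?_⟩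
  calc ∑ i, |d i j - M i j| ≤ 2 * ∑ i, (d i j - g i j) :=
        sum_abs_sub_le_two_mul_sum_sub (fun i => hgd i j) (fun i => hgM i j) (by rw [hcol, hM_col])
    _ ≤ 2 * ∑ i, ε₂ * d i j := by
        gcongr with i
        exact (sub_div_one_add_le_mul (hd0 i j) (hp i)).trans
          (mul_le_mul_of_nonneg_right (hpε i) (hd0 i j))
    _ = 2 * ε₂ := by rw [← mul_sum, hcol, mul_one]

/-- an almost doubly stochastic matrix (column sums 1, row sums 1 + ε'ᵢ with
|ε'ᵢ| ≤ ε₂ < 1) can be corrected to a doubly stochastic matrix with column-wise ℓ¹-error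
at most 2ε₂. -/
theorem exists_doublyStochastic_correction {l : ℕ} (hl : 0 < l)
    (d : Fin l → Fin l → ℝ) (ε' : Fin l → ℝ) (ε₂ : ℝ)
    (hd0 : ∀ i j, 0 ≤ d i j) (hd1 : ∀ i j, d i j ≤ 1)
    (hcol : ∀ j, ∑ i, d i j = 1)
    (hrow : ∀ i, ∑ j, d i j = 1 + ε' i)
    (hε' : ∀ i, |ε' i| ≤ ε₂) (hε₂ : ε₂ < 1) :
    ∃ d' : Fin l → Fin l → ℝ, (∀ i j, 0 ≤ d' i j) ∧
      (∀ i, ∑ j, d' i j = 1) ∧ (∀ j, ∑ i, d' i j = 1) ∧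
      ∀ j, ∑ i, |d i j - d' i j| ≤ 2 * ε₂ :=
  exists_doublyStochastic_correction_general d ε' ε₂ hd0 hcol hrow hε'
end

section
/- Let A be a unital C*-algebra with a unique tracial state τ, let p₁,...,p_l be mutually orthogonal projections summing to 1_A, with all pᵢ mutually unitarily equivalent (hence τ(pᵢ) = 1/l), and let x = Σᵢ λᵢpᵢ, y = Σᵢ μᵢpᵢ. Suppose φ : A → A is a unital positive linear map with ‖φ(y) − x‖ < ε₁ and |τ(φ(Q_k)) − τ(Q_k)| ≤ s·ε₂ for each spectral projection Q_k of y (the sum of those pᵢ with μᵢ equal to a fixed value), where s = min_k τ(Q_k). Then for each j, |λⱼ − Σᵢ μᵢ d_{ij}| < ε₁ where d_{ij} = τ(pⱼφ(Q_{k(i)})pⱼ)/τ(Q_{k(i)}) and k(i) is the index with i ∈ S_{k(i)}; moreover each column of (d_{ij}) sums to 1 and the i-th row sums to 1 + ε'ᵢ with |ε'ᵢ| ≤ ε₂. -/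
open scoped ComplexOrder

/-!
The weights `d i j` are traces of the compressions `p j * φ (Q m) * p j`, which are real because
`φ` is positive. Since all `p i` are unitarily equivalent, `τ (p i) = 1 / l`, so `τ (Q m)` is
`1 / l` times the size of the `m`-th spectral block, and averaging over the blocks turns
`∑ i, d i j * ν (k i)` into `l * τ (p j * φ (∑ i, ν (k i) • p i) * p j)`. For `ν = 1` this is
`l * τ (p j) = 1`, the column sum. For `ν = μ` it is compared with
`λ j = l * τ (p j * x * p j)`; the difference is `l * τ (p j * c * p j)` with `‖c‖ < ε₁`, and
`|τ (p c p)| ≤ ‖c‖ τ (p)` is the Cauchy–Schwarz inequality in the GNS space of `τ`.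
For the rows, traciality gives `∑ j, τ (p j * a * p j) = τ a`, so the `i`-th row sum is
`τ (φ Q) / τ Q`, which is within `ε₂` of `1` because `τ Q ≥ s`.
-/

open Finset
open scoped InnerProductSpace

namespace PositiveLinearMap

variable {A : Type*} [NonUnitalCStarAlgebra A] [PartialOrder A] [StarOrderedRing A]
  (f : A →ₚ[ℂ] ℂ)

lemma norm_apply_star_mul_mul_le (b c : A) :
    ‖f (star b * c * b)‖ ≤ ‖c‖ * (f (star b * b)).re := by
  set x := f.toPreGNS b
  have hinner : f (star b * c * b) = ⟪x, f.leftMulMapPreGNS c x⟫_ℂ := by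
    simp [x, preGNS_inner_def, mul_assoc]
  have hleft : ‖f.leftMulMapPreGNS c x‖ ≤ ‖c‖ * ‖x‖ :=
    (f.leftMulMapPreGNS c).le_of_opNorm_le (LinearMap.mkContinuous_norm_le _ (norm_nonneg c) _) x
  have hnorm : ‖x‖ ^ 2 = (f (star b * b)).re := by
    have := congrArg Complex.re (f.preGNS_norm_sq x)
    rwa [← Complex.ofReal_pow, Complex.ofReal_re] at this
  calc ‖f (star b * c * b)‖ ≤ ‖x‖ * (‖c‖ * ‖x‖) :=
        hinner ▸ (norm_inner_le_norm _ _).trans (by gcongr)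
    _ = ‖c‖ * (f (star b * b)).re := by rw [← hnorm]; ring

lemma norm_apply_mul_mul_le_of_isStarProjection {p : A} (hp : IsStarProjection p) (c : A) :
    ‖f (p * c * p)‖ ≤ ‖c‖ * (f p).re := by
  simpa [hp.isSelfAdjoint.star_eq, hp.isIdempotentElem.eq] using f.norm_apply_star_mul_mul_le p c

end PositiveLinearMap

section Trace

variable {R M : Type*}

lemma apply_star_mul_mul_of_mem_unitary [Monoid R] [StarMul R] (τ : R → M)
    (hτ : ∀ a b, τ (a * b) = τ (b * a)) {u : R} (hu : u ∈ unitary R) (a : R) :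
    τ (star u * a * u) = τ a := by
  rw [hτ, ← mul_assoc, Unitary.mul_star_self_of_mem hu, one_mul]

lemma apply_mul_mul_of_isIdempotentElem [Semigroup R] (τ : R → M)
    (hτ : ∀ a b, τ (a * b) = τ (b * a)) {p : R} (hp : IsIdempotentElem p) (a : R) :
    τ (p * a * p) = τ (p * a) := by
  rw [hτ, ← mul_assoc, hp.eq]

variable {ι F : Type*} [Fintype ι] [Semiring R]

lemma sum_apply_mul_mul_eq [AddCommMonoid M] [FunLike F R M] [AddMonoidHomClass F R M] (τ : F)
    (hτ : ∀ a b, τ (a * b) = τ (b * a)) (p : ι → R) (hp : ∀ i, IsIdempotentElem (p i))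
    (hsum : ∑ i, p i = 1) (a : R) : ∑ i, τ (p i * a * p i) = τ a := by
  simp_rw [apply_mul_mul_of_isIdempotentElem τ hτ (hp _), ← map_sum, ← sum_mul, hsum, one_mul]

lemma apply_eq_inv_card_of_unitarilyEquivalent {K : Type*} [StarMul R] [DivisionSemiring K]
    [FunLike F R K] [AddMonoidHomClass F R K] (τ : F) (hτ1 : τ 1 = 1)
    (hτ : ∀ a b, τ (a * b) = τ (b * a)) (p : ι → R) (hsum : ∑ i, p i = 1)
    (hequiv : ∀ i j, ∃ u ∈ unitary R, star u * p i * u = p j) (i : ι) :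
    τ (p i) = (Fintype.card ι : K)⁻¹ := by
  have heq : ∀ j, τ (p j) = τ (p i) := fun j ↦ by
    obtain ⟨u, hu, hu_conj⟩ := hequiv i j
    rw [← hu_conj]
    exact apply_star_mul_mul_of_mem_unitary τ hτ hu _
  refine eq_inv_of_mul_eq_one_right ?_
  calc (Fintype.card ι : K) * τ (p i) = ∑ j, τ (p j) := by simp [heq]
    _ = 1 := by rw [← map_sum, hsum, hτ1]

end Trace

lemma re_apply_sum_eq_card_mul {ι M : Type*} [AddCommMonoid M] [Module ℂ M] {τ : M →ₗ[ℂ] ℂ}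
    {p : ι → M} {t : ℝ} (hτp : ∀ i, τ (p i) = t) (s : Finset ι) :
    (τ (∑ i ∈ s, p i)).re = #s * t := by
  simp [map_sum, hτp]

lemma mul_sum_smul_mul_self {ι 𝕜 R : Type*} [Fintype ι] [CommSemiring 𝕜] [Semiring R]
    [Algebra 𝕜 R] (p : ι → R) {j : ι} (hp : IsIdempotentElem (p j))
    (horth : ∀ i ≠ j, p j * p i = 0) (c : ι → 𝕜) :
    p j * (∑ i, c i • p i) * p j = c j • p j := by
  rw [mul_sum, sum_mul, sum_eq_single j]
  · rw [mul_smul_comm, smul_mul_assoc, hp.eq, hp.eq]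
  · intro i _ hij
    rw [mul_smul_comm, horth i hij, smul_zero, zero_mul]
  · simp

section Fiber

variable {ι κ : Type*} [Fintype ι] [Fintype κ] [DecidableEq κ]

lemma sum_comp_div_card_fiber {K : Type*} [Field K] [CharZero K] {k : ι → κ}
    (hk : Function.Surjective k) (g : κ → K) :
    ∑ i, g (k i) / #{i' | k i' = k i} = ∑ m, g m := by
  rw [← sum_fiberwise' univ k (fun m ↦ g m / #{i' | k i' = m})]
  refine sum_congr rfl fun m _ ↦ ?_
  obtain ⟨i, rfl⟩ := hk m
  have hcard : (#{i' | k i' = k i} : K) ≠ 0 := Nat.cast_ne_zero.mpr (card_ne_zero.mpr ⟨i, by simp⟩)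
  rw [sum_const, nsmul_eq_mul]
  field_simp

lemma sum_comp_smul_eq_sum_smul_sum_fiber {𝕜 M : Type*} [Semiring 𝕜] [AddCommMonoid M]
    [Module 𝕜 M] (k : ι → κ) (ν : κ → 𝕜) (p : ι → M) :
    ∑ i, ν (k i) • p i = ∑ m, ν m • ∑ i with k i = m, p i := by
  simp_rw [smul_sum]
  rw [← sum_fiberwise univ k]
  refine sum_congr rfl fun m _ ↦ sum_congr rfl fun i hi ↦ ?_
  rw [(mem_filter.mp hi).2]

end Fiber

lemma abs_div_sub_one_le_of_abs_sub_le {a b s ε : ℝ} (hs : 0 < s) (hsb : s ≤ b)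
    (h : |a - b| ≤ s * ε) : |a / b - 1| ≤ ε := by
  have hb : 0 < b := hs.trans_le hsb
  have hε : 0 ≤ ε := nonneg_of_mul_nonneg_right ((abs_nonneg _).trans h) hs
  rw [div_sub_one hb.ne', abs_div, abs_of_pos hb, div_le_iff₀ hb]
  nlinarith

section Compression

variable {A ι κ : Type*}

noncomputable def compressionMatrix [NonUnitalNonAssocSemiring A] [Module ℂ A] (τ : A →ₗ[ℂ] ℂ)
    (φ : A →ₗ[ℂ] A) (p : ι → A) (Q : κ → A) (k : ι → κ) (i j : ι) : ℝ :=
  (τ (p j * φ (Q (k i)) * p j)).re / (τ (Q (k i))).re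

lemma sum_compressionMatrix_row [Fintype ι] [Semiring A] [Module ℂ A] {τ : A →ₗ[ℂ] ℂ}
    (hτ : ∀ a b, τ (a * b) = τ (b * a)) (φ : A →ₗ[ℂ] A) {p : ι → A}
    (hp : ∀ i, IsIdempotentElem (p i)) (hsum : ∑ i, p i = 1) (Q : κ → A) (k : ι → κ) (i : ι) :
    ∑ j, compressionMatrix τ φ p Q k i j = (τ (φ (Q (k i)))).re / (τ (Q (k i))).re := by
  simp_rw [compressionMatrix, ← sum_div, ← Complex.re_sum, sum_apply_mul_mul_eq τ hτ p hp hsum]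

variable [CStarAlgebra A] [PartialOrder A] [StarOrderedRing A]

lemma sum_compressionMatrix_mul_comp [Fintype ι] [Fintype κ] [DecidableEq κ] {τ : A →ₗ[ℂ] ℂ}
    (hτ : ∀ a, 0 ≤ a → 0 ≤ τ a) {φ : A →ₗ[ℂ] A} (hφ : ∀ a, 0 ≤ a → 0 ≤ φ a) {p : ι → A}
    (hp : ∀ i, IsStarProjection (p i)) {t : ℝ} (hτp : ∀ i, τ (p i) = t) {k : ι → κ}
    (hk : Function.Surjective k) {Q : κ → A} (hQ : ∀ m, Q m = ∑ i with k i = m, p i)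
    (j : ι) (ν : κ → ℂ) :
    ∑ i, (compressionMatrix τ φ p Q k i j : ℂ) * ν (k i) =
      (t : ℂ)⁻¹ * τ (p j * φ (∑ i, ν (k i) • p i) * p j) := by
  have hreal : ∀ m, ((τ (p j * φ (Q m) * p j)).re : ℂ) = τ (p j * φ (Q m) * p j) := fun m ↦ by
    have hQ0 : 0 ≤ Q m := hQ m ▸ sum_nonneg fun i _ ↦ (hp i).nonneg
    have h := hτ _ (star_left_conjugate_nonneg (hφ _ hQ0) (p j))
    rw [(hp j).isSelfAdjoint.star_eq] at h
    exact (Complex.eq_re_of_ofReal_le (r := 0) (by simpa using h)).symm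
  calc ∑ i, (compressionMatrix τ φ p Q k i j : ℂ) * ν (k i)
      = ∑ i, (t : ℂ)⁻¹ * ((τ (p j * φ (Q (k i)) * p j)).re : ℂ) * ν (k i) /
          #{i' | k i' = k i} := by
        refine sum_congr rfl fun i _ ↦ ?_
        rw [compressionMatrix, hQ, re_apply_sum_eq_card_mul hτp, div_mul_eq_div_div_swap]
        push_cast
        ring
    _ = ∑ m, (t : ℂ)⁻¹ * ((τ (p j * φ (Q m) * p j)).re : ℂ) * ν m :=
        sum_comp_div_card_fiber hk fun m ↦ (t : ℂ)⁻¹ * ((τ (p j * φ (Q m) * p j)).re : ℂ) * ν m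
    _ = (t : ℂ)⁻¹ * τ (p j * φ (∑ m, ν m • Q m) * p j) := by
        rw [map_sum, mul_sum, sum_mul, map_sum, mul_sum]
        refine sum_congr rfl fun m _ ↦ ?_
        rw [map_smul, mul_smul_comm, smul_mul_assoc, map_smul, smul_eq_mul, hreal]
        ring
    _ = (t : ℂ)⁻¹ * τ (p j * φ (∑ i, ν (k i) • p i) * p j) := by
        rw [sum_comp_smul_eq_sum_smul_sum_fiber k ν p]
        simp only [hQ]

lemma sum_compressionMatrix_col [Fintype ι] [Fintype κ] [DecidableEq κ] {τ : A →ₗ[ℂ] ℂ}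
    (hτ : ∀ a, 0 ≤ a → 0 ≤ τ a) {φ : A →ₗ[ℂ] A} (hφ : ∀ a, 0 ≤ a → 0 ≤ φ a) (hφ1 : φ 1 = 1)
    {p : ι → A} (hp : ∀ i, IsStarProjection (p i)) (hsum : ∑ i, p i = 1) {t : ℝ} (ht : t ≠ 0)
    (hτp : ∀ i, τ (p i) = t) {k : ι → κ} (hk : Function.Surjective k) {Q : κ → A}
    (hQ : ∀ m, Q m = ∑ i with k i = m, p i) (j : ι) :
    ∑ i, compressionMatrix τ φ p Q k i j = 1 := by
  have h := sum_compressionMatrix_mul_comp hτ hφ hp hτp hk hQ j 1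
  simp only [Pi.one_apply, mul_one, one_smul, hsum, hφ1, (hp j).isIdempotentElem.eq, hτp] at h
  exact_mod_cast h.trans (inv_mul_cancel₀ (Complex.ofReal_ne_zero.mpr ht))

lemma norm_sub_inv_mul_apply_mul_mul_le [Fintype ι] {τ : A →ₗ[ℂ] ℂ} (hτ : ∀ a, 0 ≤ a → 0 ≤ τ a)
    {p : ι → A} {j : ι} (hp : IsStarProjection (p j)) (horth : ∀ i ≠ j, p j * p i = 0)
    {t : ℝ} (ht : 0 < t) (hτp : τ (p j) = t) (lam : ι → ℂ) (b : A) :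
    ‖lam j - (t : ℂ)⁻¹ * τ (p j * b * p j)‖ ≤ ‖∑ i, lam i • p i - b‖ := by
  have hx : τ (p j * (∑ i, lam i • p i) * p j) = lam j * t := by
    rw [mul_sum_smul_mul_self p hp.isIdempotentElem horth, map_smul, hτp, smul_eq_mul]
  have hbound : ‖τ (p j * (∑ i, lam i • p i - b) * p j)‖ ≤
      ‖∑ i, lam i • p i - b‖ * (τ (p j)).re :=
    (PositiveLinearMap.mk₀ τ hτ).norm_apply_mul_mul_le_of_isStarProjection hp _
  rw [hτp, Complex.ofReal_re] at hbound
  have hdiff : lam j - (t : ℂ)⁻¹ * τ (p j * b * p j) =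
      (t : ℂ)⁻¹ * τ (p j * (∑ i, lam i • p i - b) * p j) := by
    rw [mul_sub, sub_mul, map_sub, hx]
    field_simp
  rw [hdiff, norm_mul, norm_inv, Complex.norm_real, Real.norm_of_nonneg ht.le]
  calc t⁻¹ * ‖τ (p j * (∑ i, lam i • p i - b) * p j)‖
      ≤ t⁻¹ * (‖∑ i, lam i • p i - b‖ * t) := by
        gcongr
    _ = ‖∑ i, lam i • p i - b‖ := by field_simp

end Compression

theorem almost_doublyStochastic_from_positive_map_general {A : Type*} [CStarAlgebra A]
    [PartialOrder A] [StarOrderedRing A] {l N : ℕ} (hN : 0 < N)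
    (τ : A →ₗ[ℂ] ℂ)
    (hτ1 : τ 1 = 1) (hτpos : ∀ a, 0 ≤ τ (star a * a)) (hτtr : ∀ a b, τ (a * b) = τ (b * a))
    (p : Fin l → A) (hproj : ∀ i, p i * p i = p i ∧ star (p i) = p i)
    (horth : ∀ i j, i ≠ j → p i * p j = 0)
    (hsum : ∑ i, p i = 1)
    (hequiv : ∀ i j, ∃ u ∈ unitary A, star u * p i * u = p j)
    (lam mu : Fin l → ℂ)
    (k : Fin l → Fin N) (hk : ∀ i i', k i = k i' ↔ mu i = mu i')
    (hksurj : Function.Surjective k)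
    (Q : Fin N → A) (hQ : ∀ m, Q m = ∑ i ∈ Finset.univ.filter (fun i => k i = m), p i)
    (s : ℝ)
    (hs : s = Finset.univ.inf'
        (Finset.univ_nonempty_iff.mpr (Fin.pos_iff_nonempty.mp hN))
        fun m => (τ (Q m)).re)
    (φ : A →ₗ[ℂ] A) (hφ1 : φ 1 = 1) (hφpos : ∀ a : A, 0 ≤ a → 0 ≤ φ a)
    (ε₁ ε₂ : ℝ)
    (hclose : ‖φ (∑ i, mu i • p i) - ∑ i, lam i • p i‖ < ε₁)
    (htrQ : ∀ m, ‖τ (φ (Q m)) - τ (Q m)‖ ≤ s * ε₂)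
    (d : Fin l → Fin l → ℝ)
    (hd : ∀ i j, d i j = (τ (p j * φ (Q (k i)) * p j)).re / (τ (Q (k i))).re) :
    (∀ j, ‖lam j - ∑ i, (d i j : ℂ) * mu i‖ < ε₁) ∧
    (∀ j, ∑ i, d i j = 1) ∧
    (∀ i, |(∑ j, d i j) - 1| ≤ ε₂) := by
  have hτ : ∀ a, 0 ≤ a → 0 ≤ τ a := fun a ha ↦ by
    obtain ⟨b, rfl⟩ := CStarAlgebra.nonneg_iff_eq_star_mul_self.mp ha
    exact hτpos b
  have hp : ∀ i, IsStarProjection (p i) := fun i ↦ ⟨(hproj i).1, (hproj i).2⟩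
  have hτp : ∀ i, τ (p i) = ((l : ℝ)⁻¹ : ℝ) := by
    simpa using apply_eq_inv_card_of_unitarilyEquivalent τ hτ1 hτtr p hsum hequiv
  obtain rfl : d = compressionMatrix τ φ p Q k := funext₂ hd
  obtain ⟨ν, hν⟩ : ∃ ν : Fin N → ℂ, ∀ i, mu i = ν (k i) :=
    ⟨fun m ↦ mu (Function.surjInv hksurj m),
      fun i ↦ (hk _ _).1 (Function.surjInv_eq hksurj (k i)).symm⟩
  refine ⟨fun j ↦ ?_, fun j ↦ ?_, fun i ↦ ?_⟩
  · simp_rw [hν] at hclose ⊢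
    rw [sum_compressionMatrix_mul_comp hτ hφpos hp hτp hksurj hQ]
    refine (norm_sub_inv_mul_apply_mul_mul_le hτ (hp j) (fun i hi ↦ horth j i hi.symm)
      (by simpa using j.pos) (hτp j) lam _).trans_lt ?_
    rwa [norm_sub_rev]
  · exact sum_compressionMatrix_col hτ hφpos hφ1 hp hsum (by simpa using j.pos.ne') hτp hksurj hQ j
  · have hτQ : ∀ m, 0 < (τ (Q m)).re := fun m ↦ by
      obtain ⟨i, rfl⟩ := hksurj m
      rw [hQ, re_apply_sum_eq_card_mul hτp]
      exact mul_pos (by exact_mod_cast card_pos.2 ⟨i, by simp⟩) (by simpa using i.pos)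
    have hs0 : 0 < s := hs ▸ (lt_inf'_iff _).2 fun m _ ↦ hτQ m
    rw [sum_compressionMatrix_row hτtr φ (fun j ↦ (hp j).isIdempotentElem) hsum]
    refine abs_div_sub_one_le_of_abs_sub_le hs0 (hs ▸ inf'_le _ (mem_univ _)) ?_
    exact (Complex.sub_re _ _ ▸ Complex.abs_re_le_norm _).trans (htrQ _)

/-- in a unital C*-algebra with a unique tracial state, a unital positive map φ
almost sending y = Σμᵢpᵢ to x = Σλᵢpᵢ and almost preserving the traces of the spectral
projections Q of y yields an almost doubly stochastic matrix (d_{ij}) with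
|λⱼ − Σᵢ μᵢd_{ij}| < ε₁, column sums 1, and row sums within ε₂ of 1. -/
theorem almost_doublyStochastic_from_positive_map {A : Type*} [CStarAlgebra A]
    [PartialOrder A] [StarOrderedRing A] {l N : ℕ} (hN : 0 < N)
    (τ : A →ₗ[ℂ] ℂ)
    (hτ1 : τ 1 = 1) (hτpos : ∀ a, 0 ≤ τ (star a * a)) (hτtr : ∀ a b, τ (a * b) = τ (b * a))
    (hτunique : ∀ τ' : A →ₗ[ℂ] ℂ, τ' 1 = 1 → (∀ a, 0 ≤ τ' (star a * a)) →
        (∀ a b, τ' (a * b) = τ' (b * a)) → τ' = τ)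
    (p : Fin l → A) (hproj : ∀ i, p i * p i = p i ∧ star (p i) = p i)
    (horth : ∀ i j, i ≠ j → p i * p j = 0)
    (hsum : ∑ i, p i = 1)
    (hequiv : ∀ i j, ∃ u ∈ unitary A, star u * p i * u = p j)
    (lam mu : Fin l → ℂ)
    (k : Fin l → Fin N) (hk : ∀ i i', k i = k i' ↔ mu i = mu i')
    (hksurj : Function.Surjective k)
    (Q : Fin N → A) (hQ : ∀ m, Q m = ∑ i ∈ Finset.univ.filter (fun i => k i = m), p i)
    (s : ℝ)
    (hs : s = Finset.univ.inf'
        (Finset.univ_nonempty_iff.mpr (Fin.pos_iff_nonempty.mp hN))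
        fun m => (τ (Q m)).re)
    (φ : A →ₗ[ℂ] A) (hφ1 : φ 1 = 1) (hφpos : ∀ a : A, 0 ≤ a → 0 ≤ φ a)
    (ε₁ ε₂ : ℝ)
    (hclose : ‖φ (∑ i, mu i • p i) - ∑ i, lam i • p i‖ < ε₁)
    (htrQ : ∀ m, ‖τ (φ (Q m)) - τ (Q m)‖ ≤ s * ε₂)
    (d : Fin l → Fin l → ℝ)
    (hd : ∀ i j, d i j = (τ (p j * φ (Q (k i)) * p j)).re / (τ (Q (k i))).re) :
    (∀ j, ‖lam j - ∑ i, (d i j : ℂ) * mu i‖ < ε₁) ∧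
    (∀ j, ∑ i, d i j = 1) ∧
    (∀ i, |(∑ j, d i j) - 1| ≤ ε₂) :=
  almost_doublyStochastic_from_positive_map_general hN τ hτ1 hτpos hτtr p hproj horth hsum hequiv
    lam mu k hk hksurj Q hQ s hs φ hφ1 hφpos ε₁ ε₂ hclose htrQ d hd
end

section
/- Let A be a unital C*-algebra, p ∈ A a projection, and identify pAp with its unitization having unit p. Suppose {p₁,...,pₙ} are mutually orthogonal, mutually unitarily equivalent projections summing to p, so pAp ≅ Mₙ(p₁Ap₁). Then for every doubly stochastic n×n matrix D, there is a unital trace-preserving completely positive linear map φ_D on pAp mapping the subalgebra B = {Σᵢ λᵢpᵢ : λᵢ ∈ ℂ} into itself such that φ_D(Σᵢ μᵢpᵢ) = Σᵢ λᵢpᵢ whenever (λ₁,...,λₙ)ᵀ = D(μ₁,...,μₙ)ᵀ. -/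
/-- A map between (star) rings is completely positive if all its entrywise matrix
amplifications send positive elements (elements of the form `star b * b`) to positive
elements. -/
def IsCompletelyPositive {A B : Type*} [Ring A] [StarRing A] [Ring B] [StarRing B]
    (f : A → B) : Prop :=
  ∀ (k : ℕ) (b : Matrix (Fin k) (Fin k) A),
    ∃ c : Matrix (Fin k) (Fin k) B, (star b * b).map f = star c * c

/-!
Write `φ_D` in Kraus form `φ_D a = ∑ᵢⱼ Dᵢⱼ • vᵢⱼ a vᵢⱼ⋆`, where `vᵢⱼ = Pᵢ uᵢⱼ` is the partial
isometry from `Pⱼ` onto `Pᵢ` obtained from a unitary `uᵢⱼ` with `uᵢⱼ⋆ Pᵢ uᵢⱼ = Pⱼ`. A Kraus map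
with nonnegative weights is completely positive: its amplification sends `b⋆b` to a sum of
hermitian squares, and in the C⋆-algebra of matrices over `A` such a sum is again one.
Conjugation by `vᵢⱼ` sends `Pₘ` to `δⱼₘ Pᵢ`, so `φ_D` acts on `span {Pᵢ}` through `D`, and the
row sums give `φ_D p = p`. For a tracial `τ`, `τ (φ_D a) = τ ((∑ᵢⱼ Dᵢⱼ • vᵢⱼ⋆vᵢⱼ) a)
= τ ((∑ⱼ (∑ᵢ Dᵢⱼ) • Pⱼ) a) = τ (p a)` by the column sums.
-/

open Finset

section Kraus

variable {A : Type*} [Ring A] [StarRing A] [Algebra ℂ A] {ι : Type*} [Fintype ι]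

noncomputable def krausMap (w : ι → ℝ) (V : ι → A) : A →ₗ[ℂ] A :=
  ∑ t, (w t : ℂ) • LinearMap.mulLeftRight ℂ (V t, star (V t))

variable {w : ι → ℝ} {V : ι → A}

@[simp]
lemma krausMap_apply (a : A) : krausMap w V a = ∑ t, (w t : ℂ) • (V t * a * star (V t)) := by
  simp [krausMap]

lemma krausMap_mul_mul_eq {p : A} (hp : IsSelfAdjoint p) (hV : ∀ t, V t * p = V t) (a : A) :
    krausMap w V (p * a * p) = krausMap w V a := by
  simp only [krausMap_apply]
  refine sum_congr rfl fun t _ => ?_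
  conv_rhs => rw [← hV t, star_mul, hp.star_eq]
  simp only [mul_assoc]

lemma mul_krausMap_mul_eq {p : A} (hp : IsSelfAdjoint p) (hV : ∀ t, p * V t = V t) (a : A) :
    p * krausMap w V a * p = krausMap w V a := by
  simp only [krausMap_apply, mul_sum, sum_mul, mul_smul_comm, smul_mul_assoc]
  refine sum_congr rfl fun t _ => ?_
  conv_rhs => rw [← hV t, star_mul, hp.star_eq]
  simp only [mul_assoc]

lemma trace_krausMap (τ : A →ₗ[ℂ] ℂ) (hτ : ∀ a b, τ (a * b) = τ (b * a)) (a : A) :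
    τ (krausMap w V a) = τ ((∑ t, (w t : ℂ) • (star (V t) * V t)) * a) := by
  simp only [krausMap_apply, sum_mul, smul_mul_assoc, map_sum, map_smul]
  refine sum_congr rfl fun t _ => ?_
  rw [hτ, ← mul_assoc]

end Kraus

theorem CStarAlgebra.exists_sum_star_mul_self_eq_star_mul_self {B : Type*} [CStarAlgebra B]
    [PartialOrder B] [StarOrderedRing B] {ι : Type*} (s : Finset ι) (x : ι → B) :
    ∃ c : B, ∑ t ∈ s, star (x t) * x t = star c * c :=
  CStarAlgebra.nonneg_iff_eq_star_mul_self.mp (sum_nonneg fun t _ => star_mul_self_nonneg (x t))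

theorem Matrix.exists_sum_star_mul_self_eq_star_mul_self {A : Type*} [CStarAlgebra A]
    {k : Type*} [Fintype k] [DecidableEq k] {ι : Type*} [Fintype ι] (x : ι → Matrix k k A) :
    ∃ c : Matrix k k A, ∑ t, star (x t) * x t = star c * c := by
  let := CStarAlgebra.spectralOrder A
  let := CStarAlgebra.spectralOrderedRing A
  exact CStarAlgebra.exists_sum_star_mul_self_eq_star_mul_self (B := CStarMatrix k k A) univ x

theorem isCompletelyPositive_krausMap {A : Type*} [CStarAlgebra A] {ι : Type*} [Fintype ι]
    {w : ι → ℝ} (hw : ∀ t, 0 ≤ w t) (V : ι → A) : IsCompletelyPositive (krausMap w V) := by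
  intro k b
  let x t : Matrix (Fin k) (Fin k) A :=
    ((√(w t) : ℝ) : ℂ) • (b * Matrix.diagonal fun _ => star (V t))
  have hx : ∀ t, star (x t) * x t = (w t : ℂ) •
      (Matrix.diagonal (fun _ => V t) * (star b * b) * Matrix.diagonal fun _ => star (V t)) := by
    intro t
    rw [star_smul, smul_mul_smul_comm, Complex.star_def, Complex.conj_ofReal,
      ← Complex.ofReal_mul, Real.mul_self_sqrt (hw t), star_mul, Matrix.star_eq_conjTranspose,
      Matrix.diagonal_conjTranspose]
    simp only [Pi.star_def, star_star, mul_assoc]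
  obtain ⟨c, hc⟩ := Matrix.exists_sum_star_mul_self_eq_star_mul_self x
  refine ⟨c, ?_⟩
  rw [← hc]
  ext K L
  simp [hx, Matrix.sum_apply, Matrix.diagonal_mul, Matrix.mul_diagonal]

namespace IsStarProjection

variable {A : Type*} [Ring A] [StarRing A] {q r u : A}

lemma mul_unitary_mul_star_self (hq : IsStarProjection q) (hu : u ∈ unitary A) :
    q * u * star (q * u) = q := by
  rw [star_mul, hq.isSelfAdjoint.star_eq, mul_assoc, ← mul_assoc u,
    Unitary.mul_star_self_of_mem hu, one_mul, hq.isIdempotentElem.eq]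

lemma star_mul_self_mul_unitary (hq : IsStarProjection q) :
    star (q * u) * (q * u) = star u * q * u := by
  rw [star_mul, hq.isSelfAdjoint.star_eq, mul_assoc, ← mul_assoc q, hq.isIdempotentElem.eq,
    ← mul_assoc]

lemma mul_unitary_mul_conj (hq : IsStarProjection q) (hu : u ∈ unitary A)
    (hr : star u * q * u = r) : q * u * r = q * u := by
  rw [← hr, ← mul_assoc, ← mul_assoc, mul_assoc q, Unitary.mul_star_self_of_mem hu, mul_one,
    hq.isIdempotentElem.eq]

end IsStarProjection

section OrthogonalFamily

variable {A : Type*} [Ring A] [StarRing A] {ι : Type*} {P : ι → A} {u : A} {i j : ι}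

lemma mul_unitary_mul_projection_mul_star [DecidableEq ι] (hP : ∀ i, IsStarProjection (P i))
    (ho : ∀ i j, i ≠ j → P i * P j = 0) (hu : u ∈ unitary A)
    (hconj : star u * P i * u = P j) (m : ι) :
    P i * u * P m * star (P i * u) = if j = m then P i else 0 := by
  have hv := (hP i).mul_unitary_mul_conj hu hconj
  split_ifs with hjm
  · rw [← hjm, hv, (hP i).mul_unitary_mul_star_self hu]
  · rw [← hv, mul_assoc (P i * u), ho j m hjm, mul_zero, zero_mul]

variable [Fintype ι]

lemma mul_sum_of_orthogonal (hP : ∀ i, IsStarProjection (P i))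
    (ho : ∀ i j, i ≠ j → P i * P j = 0) (i : ι) : P i * ∑ j, P j = P i := by
  rw [mul_sum, sum_eq_single i (fun j _ hj => ho i j hj.symm) (by simp)]
  exact (hP i).isIdempotentElem.eq

lemma sum_mul_of_orthogonal (hP : ∀ i, IsStarProjection (P i))
    (ho : ∀ i j, i ≠ j → P i * P j = 0) (i : ι) : (∑ j, P j) * P i = P i := by
  rw [sum_mul, sum_eq_single i (fun j _ hj => ho j i hj) (by simp)]
  exact (hP i).isIdempotentElem.eq

lemma isStarProjection_sum_of_orthogonal (hP : ∀ i, IsStarProjection (P i))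
    (ho : ∀ i j, i ≠ j → P i * P j = 0) : IsStarProjection (∑ i, P i) where
  isIdempotentElem := by
    rw [IsIdempotentElem, mul_sum]
    exact sum_congr rfl fun i _ => sum_mul_of_orthogonal hP ho i
  isSelfAdjoint := by
    rw [IsSelfAdjoint, star_sum]
    exact sum_congr rfl fun i _ => (hP i).isSelfAdjoint.star_eq

lemma mul_unitary_mul_sum (hP : ∀ i, IsStarProjection (P i))
    (ho : ∀ i j, i ≠ j → P i * P j = 0) (hu : u ∈ unitary A)
    (hconj : star u * P i * u = P j) : P i * u * ∑ k, P k = P i * u := by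
  rw [← (hP i).mul_unitary_mul_conj hu hconj, mul_assoc, mul_sum_of_orthogonal hP ho]

lemma sum_mul_mul_unitary (hP : ∀ i, IsStarProjection (P i))
    (ho : ∀ i j, i ≠ j → P i * P j = 0) : (∑ k, P k) * (P i * u) = P i * u := by
  rw [← mul_assoc, sum_mul_of_orthogonal hP ho]

end OrthogonalFamily

section DoublyStochasticMap

variable {A : Type*} [Ring A] [StarRing A] [Algebra ℂ A] {ι : Type*} [Fintype ι]

noncomputable def doublyStochasticMap (P : ι → A) (u : ι → ι → A) (D : ι → ι → ℝ) :
    A →ₗ[ℂ] A :=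
  krausMap (fun t : ι × ι => D t.1 t.2) fun t => P t.1 * u t.1 t.2

variable {P : ι → A} {u : ι → ι → A} (D : ι → ι → ℝ)

lemma doublyStochasticMap_sum_smul (hP : ∀ i, IsStarProjection (P i))
    (ho : ∀ i j, i ≠ j → P i * P j = 0) (hu : ∀ i j, u i j ∈ unitary A)
    (hconj : ∀ i j, star (u i j) * P i * u i j = P j) (μ : ι → ℂ) :
    doublyStochasticMap P u D (∑ m, μ m • P m) = ∑ i, (∑ j, (D i j : ℂ) * μ j) • P i := by
  classical
  have hproj : ∀ m, doublyStochasticMap P u D (P m) = ∑ i, (D i m : ℂ) • P i := by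
    intro m
    simp only [doublyStochasticMap, krausMap_apply, Fintype.sum_prod_type,
      mul_unitary_mul_projection_mul_star hP ho (hu _ _) (hconj _ _), smul_ite, smul_zero,
      sum_ite_eq', mem_univ, if_true]
  simp only [map_sum, map_smul, hproj, smul_sum, smul_smul, sum_smul]
  rw [sum_comm]
  simp only [mul_comm]

lemma doublyStochasticMap_mul_mul_eq (hP : ∀ i, IsStarProjection (P i))
    (ho : ∀ i j, i ≠ j → P i * P j = 0) (hu : ∀ i j, u i j ∈ unitary A)
    (hconj : ∀ i j, star (u i j) * P i * u i j = P j) (a : A) :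
    doublyStochasticMap P u D ((∑ k, P k) * a * ∑ k, P k) = doublyStochasticMap P u D a :=
  krausMap_mul_mul_eq (isStarProjection_sum_of_orthogonal hP ho).isSelfAdjoint
    (fun _ => mul_unitary_mul_sum hP ho (hu _ _) (hconj _ _)) a

lemma sum_mul_doublyStochasticMap_mul_sum (hP : ∀ i, IsStarProjection (P i))
    (ho : ∀ i j, i ≠ j → P i * P j = 0) (a : A) :
    (∑ k, P k) * doublyStochasticMap P u D a * ∑ k, P k = doublyStochasticMap P u D a :=
  mul_krausMap_mul_eq (isStarProjection_sum_of_orthogonal hP ho).isSelfAdjoint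
    (fun _ => sum_mul_mul_unitary hP ho) a

lemma trace_doublyStochasticMap (hP : ∀ i, IsStarProjection (P i))
    (hconj : ∀ i j, star (u i j) * P i * u i j = P j)
    (hD : ∀ j, ∑ i, D i j = 1) (τ : A →ₗ[ℂ] ℂ) (hτ : ∀ a b, τ (a * b) = τ (b * a)) (a : A) :
    τ (doublyStochasticMap P u D a) = τ ((∑ k, P k) * a) := by
  have hweight : ∑ t : ι × ι, (D t.1 t.2 : ℂ) • (star (P t.1 * u t.1 t.2) * (P t.1 * u t.1 t.2))
      = ∑ k, P k := by
    simp only [Fintype.sum_prod_type, (hP _).star_mul_self_mul_unitary, hconj]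
    rw [sum_comm]
    simp only [← sum_smul, ← Complex.ofReal_sum, hD, Complex.ofReal_one, one_smul]
  rw [doublyStochasticMap, trace_krausMap τ hτ, hweight]

end DoublyStochasticMap

theorem exists_ucp_corner_map_of_doublyStochastic_general {A : Type*} [CStarAlgebra A] {n : ℕ}
    (p : A)
    (P : Fin n → A) (hP : ∀ i, P i * P i = P i ∧ star (P i) = P i)
    (ho : ∀ i j, i ≠ j → P i * P j = 0) (hsum : ∑ i, P i = p)
    (hequiv : ∀ i j, ∃ u ∈ unitary A, star u * P i * u = P j)
    (D : Fin n → Fin n → ℝ) (hD0 : ∀ i j, 0 ≤ D i j)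
    (hDr : ∀ i, ∑ j, D i j = 1) (hDc : ∀ j, ∑ i, D i j = 1) :
    ∃ φ : A →ₗ[ℂ] A, φ p = p ∧ IsCompletelyPositive φ ∧
      (∀ a, φ a = φ (p * a * p)) ∧ (∀ a, p * φ a * p = φ a) ∧
      (∀ lam : Fin n → ℂ, ∃ lam' : Fin n → ℂ,
        φ (∑ i, lam i • P i) = ∑ i, lam' i • P i) ∧
      (∀ mu lam : Fin n → ℂ, (∀ i, lam i = ∑ j, (D i j : ℂ) * mu j) →
        φ (∑ i, mu i • P i) = ∑ i, lam i • P i) ∧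
      ∀ τ : A →ₗ[ℂ] ℂ, (∀ a b, τ (a * b) = τ (b * a)) →
        ∀ a, τ (φ (p * a * p)) = τ (p * a * p) := by
  choose u hu hconj using hequiv
  replace hP i : IsStarProjection (P i) := isStarProjection_iff'.mpr (hP i)
  subst hsum
  have hB := doublyStochasticMap_sum_smul D hP ho hu hconj
  refine ⟨doublyStochasticMap P u D, ?_, isCompletelyPositive_krausMap (fun _ => hD0 _ _) _,
    fun a => (doublyStochasticMap_mul_mul_eq D hP ho hu hconj a).symm,
    sum_mul_doublyStochasticMap_mul_sum D hP ho, fun lam => ⟨_, hB lam⟩,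
    fun mu lam hlam => by simp only [hB, hlam], fun τ hτ a => ?_⟩
  · simpa [← Complex.ofReal_sum, hDr] using hB 1
  · rw [trace_doublyStochasticMap D hP hconj hDc τ hτ, ← mul_assoc, ← mul_assoc,
      (isStarProjection_sum_of_orthogonal hP ho).isIdempotentElem.eq]

/-- given mutually orthogonal, mutually unitarily equivalent projections
P₁,...,Pₙ summing to a projection p, every doubly stochastic matrix D induces a unital
trace-preserving completely positive map φ_D on the corner pAp which maps the span
B = {Σ λᵢPᵢ} into itself and sends Σ μᵢPᵢ to Σ λᵢPᵢ where λ = Dμ. -/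
theorem exists_ucp_corner_map_of_doublyStochastic {A : Type*} [CStarAlgebra A] {n : ℕ}
    (p : A) (hp : p * p = p ∧ star p = p)
    (P : Fin n → A) (hP : ∀ i, P i * P i = P i ∧ star (P i) = P i)
    (ho : ∀ i j, i ≠ j → P i * P j = 0) (hsum : ∑ i, P i = p)
    (hequiv : ∀ i j, ∃ u ∈ unitary A, star u * P i * u = P j)
    (D : Fin n → Fin n → ℝ) (hD0 : ∀ i j, 0 ≤ D i j)
    (hDr : ∀ i, ∑ j, D i j = 1) (hDc : ∀ j, ∑ i, D i j = 1) :
    ∃ φ : A →ₗ[ℂ] A, φ p = p ∧ IsCompletelyPositive φ ∧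
      (∀ a, φ a = φ (p * a * p)) ∧ (∀ a, p * φ a * p = φ a) ∧
      (∀ lam : Fin n → ℂ, ∃ lam' : Fin n → ℂ,
        φ (∑ i, lam i • P i) = ∑ i, lam' i • P i) ∧
      (∀ mu lam : Fin n → ℂ, (∀ i, lam i = ∑ j, (D i j : ℂ) * mu j) →
        φ (∑ i, mu i • P i) = ∑ i, lam i • P i) ∧
      ∀ τ : A →ₗ[ℂ] ℂ, (∀ a b, τ (a * b) = τ (b * a)) →
        ∀ a, τ (φ (p * a * p)) = τ (p * a * p) :=
  exists_ucp_corner_map_of_doublyStochastic_general p P hP ho hsum hequiv D hD0 hDr hDc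
end
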